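/- O(1/k) iteration complexity of iBPG at the averaged iterate: under the standing assumptions, if Σ_k η_k(‖x̃^{k+1}‖+1) < ∞, Σ_k μ_k < ∞, Σ_k ν_k < ∞, and the problem inf{F(x) : x ∈ Q} has an optimal solution x* ∈ dom φ, then there exists a constant C ≥ 0 such that F( (1/k)Σ_{i=0}^{k-1} x̃^{i+1} ) − F* ≤ C/k for all k ≥ 1. -/

import Mathlib

open Filter Topology RealInnerProductSpace

/-- The Bregman distance associated with the kernel `φ` whose gradient map is `gφ`. -/
noncomputable def breg {E : Type*} [NormedAddCommGroup E] [InnerProductSpace ℝ E]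
    (φ : E → ℝ) (gφ : E → E) (x y : E) : ℝ :=
  φ x - φ y - ⟪gφ y, x - y⟫

/-- The ν-subdifferential of `P` (a proper function with effective domain `domP`) at `x`. -/
def nuSubdiff {E : Type*} [NormedAddCommGroup E] [InnerProductSpace ℝ E]
    (P : E → ℝ) (domP : Set E) (ν : ℝ) (x : E) : Set E :=
  {d : E | ∀ u ∈ domP, P x + ⟪d, u - x⟫ - ν ≤ P u}

open Classical in
/-- Extension of a real-valued function with effective domain `dom` to an `EReal`-valued
function taking the value `⊤` outside `dom`. -/
noncomputable def extFun {E : Type*} (g : E → ℝ) (dom : Set E) : E → EReal :=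
  fun x => if x ∈ dom then (g x : EReal) else ⊤

/-- `φ` (with effective domain `domφ` and gradient map `gφ`) is essentially smooth. -/
def EssentiallySmooth {E : Type*} [NormedAddCommGroup E] [InnerProductSpace ℝ E]
    [FiniteDimensional ℝ E] (φ : E → ℝ) (domφ : Set E) (gφ : E → E) : Prop :=
  (interior domφ).Nonempty ∧
  (∀ x ∈ interior domφ, HasGradientAt φ (gφ x) x) ∧
  ∀ (u : ℕ → E) (u₀ : E), (∀ n, u n ∈ interior domφ) →
    Tendsto u atTop (𝓝 u₀) → u₀ ∈ frontier (interior domφ) →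
    Tendsto (fun n => ‖gφ (u n)‖) atTop atTop

/-- The standing assumptions (Assumption A) for the problem `inf {P x + f x : x ∈ Q}`. -/
structure Standing {E : Type*} [NormedAddCommGroup E] [InnerProductSpace ℝ E]
    [FiniteDimensional ℝ E] (Q domφ domP domf X : Set E)
    (φ P f : E → ℝ) (gφ gf : E → E) (L : ℝ) : Prop where
  hQclosed : IsClosed Q
  hQconv : Convex ℝ Q
  hQint : (interior Q).Nonempty
  hφconv : ConvexOn ℝ domφ φ
  hφstrict : StrictConvexOn ℝ (interior domφ) φ
  hφsmooth : EssentiallySmooth φ domφ gφ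
  hφQ : closure domφ = Q
  hPne : domP.Nonempty
  hPconv : ConvexOn ℝ domP P
  hPclosed : LowerSemicontinuous (extFun P domP)
  hPQ : (domP ∩ interior Q).Nonempty
  hfconv : ConvexOn ℝ domf f
  hfclosed : LowerSemicontinuous (extFun f domf)
  hfdom : domφ ⊆ domf
  hfgrad : ∀ x ∈ interior domφ, HasGradientAt f (gf x) x
  hXclosed : IsClosed X
  hXconv : Convex ℝ X
  hXsup : domP ∩ domφ ⊆ X
  hLnn : 0 ≤ L
  hrel : ∀ u ∈ interior domφ ∩ X, ∀ v ∈ domφ ∩ X,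
    f v ≤ f u + ⟪gf u, v - u⟫ + L * breg φ gφ v u

/-- The iBPG iterates with inexactness tolerance sequences `η`, `μ`, `ν`. -/
structure IBPGIter {E : Type*} [NormedAddCommGroup E] [InnerProductSpace ℝ E]
    [FiniteDimensional ℝ E] (domφ domP X : Set E) (φ P : E → ℝ) (gφ gf : E → E) (L : ℝ)
    (η μ ν : ℕ → ℝ) (x xt : ℕ → E) : Prop where
  hη : ∀ k, 0 ≤ η k
  hμ : ∀ k, 0 ≤ μ k
  hν : ∀ k, 0 ≤ ν k
  hx : ∀ k, x k ∈ X ∩ interior domφ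
  hxt : ∀ k, xt k ∈ domP ∩ domφ
  hinex : ∀ k, ∃ d ∈ nuSubdiff P domP (ν k) (xt (k+1)),
    ‖d + gf (x k) + L • (gφ (x (k+1)) - gφ (x k))‖ ≤ η k
  hdist : ∀ k, breg φ gφ (xt (k+1)) (x (k+1)) ≤ μ k

/-!
The iBPG step is a descent step for the Lyapunov quantity `L · D_φ(x*, xᵏ)`: combining the
`ν`-subgradient inequality for `P` at `x̃ᵏ⁺¹`, convexity of `f` at `xᵏ` and the relative
smoothness bound between `xᵏ` and `x̃ᵏ⁺¹`, the Bregman three-point identity gives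
`F(x̃ᵏ⁺¹) − F(x*) ≤ L D_φ(x*, xᵏ) − L D_φ(x*, xᵏ⁺¹) + εₖ` with a summable error `εₖ`.
Summing telescopes to `Σ_{i<k} (F(x̃ⁱ⁺¹) − F*) ≤ C`, and Jensen's inequality for the convex
`F` transfers this bound to the averaged iterate.
-/

theorem ConvexOn.add_inner_sub_le_of_hasGradientAt {E : Type*} [NormedAddCommGroup E]
    [InnerProductSpace ℝ E] [CompleteSpace E] {s : Set E} {f : E → ℝ} (hf : ConvexOn ℝ s f)
    {x y g : E} (hx : x ∈ s) (hy : y ∈ s) (hg : HasGradientAt f g x) :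
    f x + ⟪g, y - x⟫ ≤ f y := by
  set ℓ : ℝ →ᵃ[ℝ] E := AffineMap.lineMap x y
  have hconv : ConvexOn ℝ (Set.Icc 0 1) (f ∘ ℓ) :=
    (hf.comp_affineMap ℓ).subset (hf.1.mapsTo_lineMap hx hy) (convex_Icc 0 1)
  have hderiv : HasDerivAt (f ∘ ℓ) ⟪g, y - x⟫ 0 := by
    have h := hg.hasFDerivAt
    rw [← AffineMap.lineMap_apply_zero (k := ℝ) x y] at h
    simpa using h.comp_hasDerivAt 0 AffineMap.hasDerivAt_lineMap
  have hslope := hconv.le_slope_of_hasDerivAt (by simp) (by simp) zero_lt_one hderiv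
  simp only [slope, Function.comp_apply, ℓ, AffineMap.lineMap_apply_one,
    AffineMap.lineMap_apply_zero, sub_zero, inv_one, vsub_eq_sub, smul_eq_mul, one_mul] at hslope
  linarith

section Bregman

variable {E : Type*} [NormedAddCommGroup E] [InnerProductSpace ℝ E]

theorem breg_nonneg [CompleteSpace E] {s : Set E} {φ : E → ℝ} {gφ : E → E}
    (hφ : ConvexOn ℝ s φ) {x y : E} (hx : x ∈ s) (hy : y ∈ s) (hg : HasGradientAt φ (gφ y) y) :
    0 ≤ breg φ gφ x y := by
  have := hφ.add_inner_sub_le_of_hasGradientAt hy hx hg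
  rw [breg]
  linarith

theorem breg_add_inner_sub (φ : E → ℝ) (gφ : E → E) (z u u' w : E) :
    breg φ gφ z u + ⟪gφ u' - gφ u, w - z⟫
      = breg φ gφ w u - breg φ gφ w u' + breg φ gφ z u' := by
  simp only [breg, inner_sub_left, inner_sub_right]
  ring

theorem inexact_bregman_step_bound {φ P f : E → ℝ} {gφ gf : E → E} {domP : Set E}
    {L η μ ν : ℝ} {u u' z w d : E} (hL : 0 ≤ L) (hη : 0 ≤ η)
    (hd : d ∈ nuSubdiff P domP ν z) (hw : w ∈ domP)
    (hΔ : ‖d + gf u + L • (gφ u' - gφ u)‖ ≤ η) (hμ : breg φ gφ z u' ≤ μ)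
    (hf_upper : f z ≤ f u + ⟪gf u, z - u⟫ + L * breg φ gφ z u)
    (hf_lower : f u + ⟪gf u, w - u⟫ ≤ f w) :
    P z + f z - (P w + f w)
      ≤ L * breg φ gφ w u - L * breg φ gφ w u' + L * μ + ν + η * (‖z‖ + ‖w‖) := by
  have hP : P z + ⟪d, w - z⟫ - ν ≤ P w := hd w hw
  have hΔ_inner : ⟪d + gf u + L • (gφ u' - gφ u), z - w⟫ ≤ η * (‖z‖ + ‖w‖) :=
    calc _ ≤ ‖d + gf u + L • (gφ u' - gφ u)‖ * ‖z - w‖ := real_inner_le_norm _ _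
      _ ≤ η * (‖z‖ + ‖w‖) := mul_le_mul hΔ (norm_sub_le z w) (norm_nonneg _) hη
  have hthree := breg_add_inner_sub φ gφ z u u' w
  have hμL : L * breg φ gφ z u' ≤ L * μ := mul_le_mul_of_nonneg_left hμ hL
  simp only [inner_add_left, real_inner_smul_left, inner_sub_left, inner_sub_right]
    at hΔ_inner hP hf_upper hf_lower hthree
  linear_combination hP + hf_upper + hf_lower + hΔ_inner + hμL + L * hthree

end Bregman

theorem sum_range_le_of_le_sub_succ_add {a b c : ℕ → ℝ} (h : ∀ k, a k ≤ b k - b (k + 1) + c k)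
    (hb : ∀ k, 0 ≤ b k) (hc : ∀ k, 0 ≤ c k) (hcs : Summable c) (n : ℕ) :
    ∑ i ∈ Finset.range n, a i ≤ b 0 + ∑' i, c i :=
  calc ∑ i ∈ Finset.range n, a i ≤ ∑ i ∈ Finset.range n, (b i - b (i + 1) + c i) :=
        Finset.sum_le_sum fun i _ => h i
    _ = b 0 - b n + ∑ i ∈ Finset.range n, c i := by
        rw [Finset.sum_add_distrib, Finset.sum_range_sub']
    _ ≤ b 0 + ∑' i, c i := by
        linarith [hb n, hcs.sum_le_tsum (Finset.range n) fun i _ => hc i]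

theorem ConvexOn.map_average_sub_le_div {E : Type*} [AddCommGroup E] [Module ℝ E] {s : Set E}
    {F : E → ℝ} (hF : ConvexOn ℝ s F) {y : ℕ → E} (hy : ∀ i, y i ∈ s) {m C : ℝ} {k : ℕ}
    (hk : 1 ≤ k) (hsum : ∑ i ∈ Finset.range k, (F (y i) - m) ≤ C) :
    F ((k : ℝ)⁻¹ • ∑ i ∈ Finset.range k, y i) - m ≤ C / k := by
  have hk₀ : (0 : ℝ) < k := by exact_mod_cast hk
  have hweights : ∑ _i ∈ Finset.range k, (k : ℝ)⁻¹ = 1 := by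
    rw [Finset.sum_const, Finset.card_range, nsmul_eq_mul, mul_inv_cancel₀ hk₀.ne']
  have hjensen : F ((k : ℝ)⁻¹ • ∑ i ∈ Finset.range k, y i)
      ≤ (k : ℝ)⁻¹ * ∑ i ∈ Finset.range k, F (y i) := by
    rw [Finset.smul_sum, Finset.mul_sum]
    exact hF.map_sum_le (fun _ _ => by positivity) hweights fun i _ => hy i
  rw [Finset.sum_sub_distrib, Finset.sum_const, Finset.card_range, nsmul_eq_mul] at hsum
  rw [le_div_iff₀ hk₀]
  have := mul_le_mul_of_nonneg_left hjensen hk₀.le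
  rw [← mul_assoc, mul_inv_cancel₀ hk₀.ne', one_mul] at this
  linarith

theorem IBPGIter.objective_sub_le {E : Type*} [NormedAddCommGroup E] [InnerProductSpace ℝ E]
    [FiniteDimensional ℝ E] {Q domφ domP domf X : Set E} {φ P f : E → ℝ} {gφ gf : E → E}
    {L : ℝ} {η μ ν : ℕ → ℝ} {x xt : ℕ → E}
    (hstand : Standing Q domφ domP domf X φ P f gφ gf L)
    (hiter : IBPGIter domφ domP X φ P gφ gf L η μ ν x xt) {xstar : E}
    (hxstar : xstar ∈ domP ∩ domφ) (k : ℕ) :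
    P (xt (k + 1)) + f (xt (k + 1)) - (P xstar + f xstar)
      ≤ L * breg φ gφ xstar (x k) - L * breg φ gφ xstar (x (k + 1))
        + (L * μ k + ν k + (1 + ‖xstar‖) * (η k * (‖xt (k + 1)‖ + 1))) := by
  obtain ⟨d, hd, hΔ⟩ := hiter.hinex k
  obtain ⟨hxX, hxint⟩ := hiter.hx k
  have hxt := hiter.hxt (k + 1)
  have hstep := inexact_bregman_step_bound hstand.hLnn (hiter.hη k) hd hxstar.1 hΔ
    (hiter.hdist k) (hstand.hrel _ ⟨hxint, hxX⟩ _ ⟨hxt.2, hstand.hXsup hxt⟩)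
    (hstand.hfconv.add_inner_sub_le_of_hasGradientAt (hstand.hfdom (interior_subset hxint))
      (hstand.hfdom hxstar.2) (hstand.hfgrad _ hxint))
  have herror : η k * (‖xt (k + 1)‖ + ‖xstar‖) ≤ (1 + ‖xstar‖) * (η k * (‖xt (k + 1)‖ + 1)) := by
    nlinarith [hiter.hη k, mul_nonneg (mul_nonneg (hiter.hη k) (norm_nonneg xstar))
      (norm_nonneg (xt (k + 1)))]
  linarith

/-- **O(1/k) iteration complexity of iBPG at the averaged iterate** (Theorem 3.1(iv)). Under the
standing assumptions, if `Σ_k η_k (‖x̃^{k+1}‖+1) < ∞`, `Σ_k μ_k < ∞`, `Σ_k ν_k < ∞`, and the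
problem has an optimal solution `x* ∈ dom φ`, then there is `C ≥ 0` with
`F((1/k) Σ_{i<k} x̃^{i+1}) − F* ≤ C/k` for all `k ≥ 1`, where `F = P + f`. -/
theorem iBPG_averaged_iteration_complexity
    {E : Type*} [NormedAddCommGroup E] [InnerProductSpace ℝ E] [FiniteDimensional ℝ E]
    (Q domφ domP domf X : Set E) (φ P f : E → ℝ) (gφ gf : E → E) (L : ℝ)
    (hstand : Standing Q domφ domP domf X φ P f gφ gf L)
    (η μ ν : ℕ → ℝ) (x xt : ℕ → E)
    (hiter : IBPGIter domφ domP X φ P gφ gf L η μ ν x xt)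
    (Fstar : ℝ) (hFstar : IsGLB ((fun u => P u + f u) '' (domP ∩ domf ∩ Q)) Fstar)
    (h1 : Summable (fun k => η k * (‖xt (k+1)‖ + 1)))
    (h2 : Summable μ) (h3 : Summable ν)
    (xstar : E) (hxstar : xstar ∈ domP ∩ domφ)
    (hopt : ∀ u ∈ domP ∩ domf ∩ Q, P xstar + f xstar ≤ P u + f u) :
    ∃ C : ℝ, 0 ≤ C ∧ ∀ k : ℕ, 1 ≤ k →
      (P ((k : ℝ)⁻¹ • ∑ i ∈ Finset.range k, xt (i+1))
        + f ((k : ℝ)⁻¹ • ∑ i ∈ Finset.range k, xt (i+1))) - Fstar ≤ C / (k : ℝ) := by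
  have hFstar_ge : P xstar + f xstar ≤ Fstar := hFstar.2 <| by
    rintro _ ⟨u, hu, rfl⟩
    exact hopt u hu
  set b : ℕ → ℝ := fun k => L * breg φ gφ xstar (x k)
  set c : ℕ → ℝ := fun k => L * μ k + ν k + (1 + ‖xstar‖) * (η k * (‖xt (k + 1)‖ + 1))
  have hb : ∀ k, 0 ≤ b k := fun k => mul_nonneg hstand.hLnn <|
    breg_nonneg hstand.hφconv hxstar.2 (interior_subset (hiter.hx k).2)
      (hstand.hφsmooth.2.1 _ (hiter.hx k).2)
  have hc : ∀ k, 0 ≤ c k := fun k => by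
    have := hstand.hLnn; have := hiter.hμ k; have := hiter.hν k; have := hiter.hη k
    positivity
  have hcs : Summable c := ((h2.mul_left L).add h3).add (h1.mul_left _)
  have hFconv : ConvexOn ℝ (domP ∩ domf) (fun u => P u + f u) :=
    have hconv := hstand.hPconv.1.inter hstand.hfconv.1
    (hstand.hPconv.subset Set.inter_subset_left hconv).add
      (hstand.hfconv.subset Set.inter_subset_right hconv)
  refine ⟨b 0 + ∑' i, c i, add_nonneg (hb 0) (tsum_nonneg hc), fun k hk => ?_⟩
  have hsum := sum_range_le_of_le_sub_succ_add (hiter.objective_sub_le hstand hxstar) hb hc hcs k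
  have := hFconv.map_average_sub_le_div
    (fun i => ⟨(hiter.hxt (i + 1)).1, hstand.hfdom (hiter.hxt (i + 1)).2⟩) hk hsum
  linarith
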